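/- arXiv:2103.15594 — 4 statements merged into one kernel-verified Lean document; each statement's English description precedes it below -/
import Mathlib

section
/- For 0 < α ≤ 1, the equilibrium points of the vector field Σ_α(x,y,z) = (xz, -αyz, αy² - x²) on the unit sphere S² are exactly the four points (±√(α/(1+α)), ±√(1/(1+α)), 0) and the two poles (0,0,±1). -/
/-!
Since `α ≠ 0`, the first two components vanish iff `z = 0` or `x = y = 0`. On the equator
`z = 0` the remaining conditions `x² + y² = 1`, `α y² = x²` form a linear system in
`(x², y²)` with the unique solution `(α/(1+α), 1/(1+α))`; otherwise `x = y = 0` forces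
`α y² - x² = 0` and leaves the poles `z² = 1`.
-/

lemma Real.sq_eq_iff_eq_sqrt_or_eq_neg_sqrt {a x : ℝ} (ha : 0 ≤ a) :
    x ^ 2 = a ↔ x = √a ∨ x = -√a := by
  rw [← sq_eq_sq_iff_eq_or_eq_neg, Real.sq_sqrt ha]

section Equilibria

variable {K : Type*} [Field K] {α x y z : K}

lemma mul_eq_zero_and_mul_eq_zero_iff (hα : α ≠ 0) :
    (x * z = 0 ∧ -α * y * z = 0) ↔ z = 0 ∨ (x = 0 ∧ y = 0) := by
  simp only [mul_eq_zero, neg_eq_zero, hα, false_or]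
  tauto

lemma add_eq_one_and_mul_sub_eq_zero_iff {u v : K} (h1α : 1 + α ≠ 0) :
    (u + v = 1 ∧ α * v - u = 0) ↔ u = α / (1 + α) ∧ v = 1 / (1 + α) := by
  constructor
  · rintro ⟨hsum, hratio⟩
    have hv : v = 1 / (1 + α) := by
      rw [eq_div_iff h1α]
      linear_combination hsum + hratio
    exact ⟨by rw [hv] at hratio; linear_combination -hratio, hv⟩
  · rintro ⟨rfl, rfl⟩
    constructor <;> field_simp <;> ring

lemma sphere_equilibrium_iff (hα : α ≠ 0) (hα' : 1 + α ≠ 0) :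
    (x ^ 2 + y ^ 2 + z ^ 2 = 1 ∧ x * z = 0 ∧ -α * y * z = 0 ∧ α * y ^ 2 - x ^ 2 = 0) ↔
      (x ^ 2 = α / (1 + α) ∧ y ^ 2 = 1 / (1 + α) ∧ z = 0) ∨
        (x = 0 ∧ y = 0 ∧ z ^ 2 = 1) := by
  rw [← and_assoc (a := x * z = 0), mul_eq_zero_and_mul_eq_zero_iff hα]
  constructor
  · rintro ⟨hs, rfl | ⟨rfl, rfl⟩, hr⟩
    · left
      rw [zero_pow two_ne_zero, add_zero] at hs
      obtain ⟨hx, hy⟩ := (add_eq_one_and_mul_sub_eq_zero_iff hα').mp ⟨hs, hr⟩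
      exact ⟨hx, hy, rfl⟩
    · right
      exact ⟨rfl, rfl, by simpa using hs⟩
  · rintro (⟨hx, hy, rfl⟩ | ⟨rfl, rfl, hz⟩)
    · obtain ⟨hs, hr⟩ := (add_eq_one_and_mul_sub_eq_zero_iff hα').mpr ⟨hx, hy⟩
      exact ⟨by simpa using hs, Or.inl rfl, hr⟩
    · exact ⟨by simpa using hz, Or.inr ⟨rfl, rfl⟩, by simp⟩

end Equilibria

theorem stmt2_general (α : ℝ) (hα : 0 < α) (x y z : ℝ) :
    (x ^ 2 + y ^ 2 + z ^ 2 = 1 ∧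
      x * z = 0 ∧ -α * y * z = 0 ∧ α * y ^ 2 - x ^ 2 = 0) ↔
    ((x = Real.sqrt (α / (1 + α)) ∨ x = -Real.sqrt (α / (1 + α))) ∧
      (y = Real.sqrt (1 / (1 + α)) ∨ y = -Real.sqrt (1 / (1 + α))) ∧ z = 0) ∨
    (x = 0 ∧ y = 0 ∧ (z = 1 ∨ z = -1)) := by
  have h1α : 0 < 1 + α := by linarith
  rw [sphere_equilibrium_iff hα.ne' h1α.ne', sq_eq_one_iff,
    Real.sq_eq_iff_eq_sqrt_or_eq_neg_sqrt (by positivity),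
    Real.sq_eq_iff_eq_sqrt_or_eq_neg_sqrt (by positivity)]

/-- For `0 < α ≤ 1`, the equilibria of `Σ_α(x,y,z) = (x*z, -α*y*z, α*y² - x²)`
on the unit sphere are exactly `(±√(α/(1+α)), ±√(1/(1+α)), 0)` and `(0,0,±1)`. -/
theorem stmt2 (α : ℝ) (hα : 0 < α) (hα1 : α ≤ 1) (x y z : ℝ) :
    (x ^ 2 + y ^ 2 + z ^ 2 = 1 ∧
      x * z = 0 ∧ -α * y * z = 0 ∧ α * y ^ 2 - x ^ 2 = 0) ↔
    ((x = Real.sqrt (α / (1 + α)) ∨ x = -Real.sqrt (α / (1 + α))) ∧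
      (y = Real.sqrt (1 / (1 + α)) ∨ y = -Real.sqrt (1 / (1 + α))) ∧ z = 0) ∨
    (x = 0 ∧ y = 0 ∧ (z = 1 ∨ z = -1)) :=
  stmt2_general α hα x y z
end

section
/- (Hermite–Hadamard for log-convex functions) If f : [a,b] → ℝ is positive, continuous, and log-convex on [a,b] with f(a) ≠ f(b), then (1/(b-a)) · ∫ₐᵇ f(s) ds ≤ (f(b) - f(a)) / (log f(b) - log f(a)). -/
open Real Set

/-! On `[a, b]` the convex function `log ∘ f` lies below its chord, so `f` lies below the
exponential `x ↦ exp (m * x + c)` that agrees with `f` at `a` and `b`; integrating this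
majorant gives exactly `(f b - f a) / m`, with `m = (log (f b) - log (f a)) / (b - a)`. -/

theorem ConvexOn.le_chord_of_mem_Icc {𝕜 : Type*} [Field 𝕜] [LinearOrder 𝕜]
    [IsStrictOrderedRing 𝕜] {s : Set 𝕜} {g : 𝕜 → 𝕜} (hg : ConvexOn 𝕜 s g) {a b x : 𝕜}
    (ha : a ∈ s) (hb : b ∈ s) (hx : x ∈ Icc a b) :
    g x ≤ g a + (g b - g a) / (b - a) * (x - a) := by
  rcases eq_or_ne x a with rfl | hxa
  · simp
  have hax : 0 < x - a := sub_pos.2 (lt_of_le_of_ne hx.1 (Ne.symm hxa))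
  have hxs : x ∈ s := hg.1.segment_subset ha hb (segment_eq_Icc (hx.1.trans hx.2) ▸ hx)
  have hba : b ≠ a := (lt_of_lt_of_le (sub_pos.1 hax) hx.2).ne'
  have hslope := hg.secant_mono ha hxs hb hxa hba hx.2
  calc g x = g a + (g x - g a) / (x - a) * (x - a) := by field_simp; ring
    _ ≤ g a + (g b - g a) / (b - a) * (x - a) := by gcongr

theorem integral_exp_mul_add {m : ℝ} (hm : m ≠ 0) (a b c : ℝ) :
    ∫ x in a..b, exp (m * x + c) = (exp (m * b + c) - exp (m * a + c)) / m := by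
  rw [intervalIntegral.integral_comp_mul_add exp hm, integral_exp, smul_eq_mul, inv_mul_eq_div]

/-- Hermite–Hadamard inequality for log-convex functions: if `f` is positive,
continuous, and log-convex on `[a,b]` with `f a ≠ f b`, then
`(1/(b-a)) ∫ₐᵇ f ≤ (f b - f a) / (log (f b) - log (f a))`. -/
theorem stmt7 (a b : ℝ) (hab : a < b) (f : ℝ → ℝ)
    (hf : ContinuousOn f (Set.Icc a b))
    (hpos : ∀ x ∈ Set.Icc a b, 0 < f x)
    (hconv : ConvexOn ℝ (Set.Icc a b) (fun x => Real.log (f x)))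
    (hne : f a ≠ f b) :
    (1 / (b - a)) * ∫ s in a..b, f s ≤
      (f b - f a) / (Real.log (f b) - Real.log (f a)) := by
  have ha : a ∈ Icc a b := left_mem_Icc.2 hab.le
  have hb : b ∈ Icc a b := right_mem_Icc.2 hab.le
  have hL : log (f b) - log (f a) ≠ 0 :=
    sub_ne_zero.2 fun h => hne (log_injOn_pos (hpos a ha) (hpos b hb) h.symm)
  have hba : b - a ≠ 0 := (sub_pos.2 hab).ne'
  set m := (log (f b) - log (f a)) / (b - a) with hm_def
  have hm : m ≠ 0 := div_ne_zero hL hba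
  set c := log (f a) - m * a
  have hbound : ∀ x ∈ Icc a b, f x ≤ exp (m * x + c) := fun x hx => calc
    f x = exp (log (f x)) := (exp_log (hpos x hx)).symm
    _ ≤ exp (m * x + c) := exp_le_exp.2 <| (hconv.le_chord_of_mem_Icc ha hb hx).trans_eq (by ring)
  have hma : m * a + c = log (f a) := by ring
  have hmb : m * b + c = log (f b) := by simp only [c, hm_def]; field_simp; ring
  have hint : ∫ x in a..b, f x ≤ (f b - f a) / m := calc
    ∫ x in a..b, f x ≤ ∫ x in a..b, exp (m * x + c) :=
      intervalIntegral.integral_mono_on hab.le (hf.intervalIntegrable_of_Icc hab.le)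
        ((by fun_prop : Continuous fun x => exp (m * x + c)).intervalIntegrable a b) hbound
    _ = (f b - f a) / m := by
      rw [integral_exp_mul_add hm, hma, hmb, exp_log (hpos a ha), exp_log (hpos b hb)]
  calc (1 / (b - a)) * ∫ x in a..b, f x ≤ (1 / (b - a)) * ((f b - f a) / m) := by gcongr
    _ = (f b - f a) / (log (f b) - log (f a)) := by
        rw [hm_def]; field_simp
end

section
/- The function τ(s) = 2/(C + √(C²-4)·sin(2(s+k))), for real constants k and C ≥ 2, satisfies the stationary equation τ^{-1/2} - τ^{3/2} + d²/ds²(τ^{-1/2}) = constant (i.e., its derivative is zero), hence is a stationary solution of τ_t = D_s(τ^{-1/2} - τ^{3/2} + D_s²(τ^{-1/2})). -/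
/-!
Writing `τ = w⁻¹`, the function `u = τ^{-1/2} = √w` has `τ^{3/2} = u⁻³`, so the claim is that `u`
solves the Ermakov–Pinney equation `u'' + u = u⁻³`. For `u = √w` one computes
`4 w u (u'' + u - u⁻³) = 2 w w'' - w'² + 4 w² - 4`, and for the sinusoid
`w = (c + b sin (2 (s + k))) / 2` the right-hand side is the constant `c² - b² - 4`,
which vanishes for `c = C`, `b = √(C² - 4)`.
-/

open Real

lemma inv_rpow_neg_one_half {w : ℝ} (hw : 0 ≤ w) : w⁻¹ ^ (-(1 : ℝ) / 2) = √w := by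
  rw [inv_rpow hw, ← rpow_neg hw, neg_div, neg_neg, sqrt_eq_rpow]

lemma inv_rpow_three_halves {w : ℝ} (hw : 0 ≤ w) : w⁻¹ ^ ((3 : ℝ) / 2) = (√w ^ 3)⁻¹ := by
  rw [inv_rpow hw, sqrt_eq_rpow, ← rpow_natCast, ← rpow_mul hw]
  norm_num

section SqrtComp

variable {w w' w'' : ℝ → ℝ}

lemma deriv_sqrt_comp (hw : ∀ x, 0 < w x) (hw' : ∀ x, HasDerivAt w (w' x) x) :
    deriv (fun x => √(w x)) = fun x => w' x / (2 * √(w x)) :=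
  funext fun x => ((hw' x).sqrt (hw x).ne').deriv

lemma deriv_deriv_sqrt_comp (hw : ∀ x, 0 < w x) (hw' : ∀ x, HasDerivAt w (w' x) x)
    (hw'' : ∀ x, HasDerivAt w' (w'' x) x) (x : ℝ) :
    deriv (deriv fun x => √(w x)) x
      = (2 * w x * w'' x - w' x ^ 2) / (4 * w x * √(w x)) := by
  have hu : 0 < √(w x) := sqrt_pos.2 (hw x)
  rw [deriv_sqrt_comp hw hw']
  refine (((hw'' x).div (((hw' x).sqrt (hw x).ne').const_mul 2) (by positivity)).congr_deriv
    ?_).deriv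
  have hu2 : √(w x) ^ 2 = w x := sq_sqrt (hw x).le
  generalize √(w x) = u at hu hu2 ⊢
  rw [← hu2]
  field_simp
  ring

lemma sqrt_sub_inv_add_deriv_deriv_sqrt_comp (hw : ∀ x, 0 < w x)
    (hw' : ∀ x, HasDerivAt w (w' x) x) (hw'' : ∀ x, HasDerivAt w' (w'' x) x) (x : ℝ) :
    √(w x) - (√(w x) ^ 3)⁻¹ + deriv (deriv fun x => √(w x)) x
      = (2 * w x * w'' x - w' x ^ 2 + 4 * w x ^ 2 - 4) / (4 * w x * √(w x)) := by
  have hu : 0 < √(w x) := sqrt_pos.2 (hw x)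
  have hu2 : √(w x) ^ 2 = w x := sq_sqrt (hw x).le
  rw [deriv_deriv_sqrt_comp hw hw' hw'' x]
  generalize √(w x) = u at hu hu2 ⊢
  rw [← hu2]
  field_simp
  ring

end SqrtComp

lemma add_mul_sin_pos {b c : ℝ} (h : |b| < c) (x : ℝ) : 0 < c + b * sin x := by
  have : |b * sin x| ≤ |b| := by
    rw [abs_mul]
    exact mul_le_of_le_one_right (abs_nonneg b) (abs_sin_le_one x)
  linarith [neg_abs_le (b * sin x)]

theorem ermakov_pinney_sqrt_sinusoid {b c : ℝ} (k : ℝ) (hc : 0 < c) (hcb : c ^ 2 = b ^ 2 + 4)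
    (s : ℝ) :
    let u : ℝ → ℝ := fun s => √((c + b * sin (2 * (s + k))) / 2)
    u s - (u s ^ 3)⁻¹ + deriv (deriv u) s = 0 := by
  intro u
  have hbc : |b| < c := by
    apply abs_lt_of_sq_lt_sq _ hc.le
    linarith
  have hlin (x : ℝ) : HasDerivAt (fun s => 2 * (s + k)) 2 x := by
    simpa using ((hasDerivAt_id x).add_const k).const_mul 2
  have hw' (x : ℝ) : HasDerivAt (fun s => (c + b * sin (2 * (s + k))) / 2)
      (b * cos (2 * (x + k))) x :=
    ((((hlin x).sin.const_mul b).const_add c).div_const 2).congr_deriv (by ring)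
  have hw'' (x : ℝ) : HasDerivAt (fun s => b * cos (2 * (s + k)))
      (-2 * b * sin (2 * (x + k))) x :=
    ((hlin x).cos.const_mul b).congr_deriv (by ring)
  have hw (x : ℝ) : 0 < (c + b * sin (2 * (x + k))) / 2 := by
    have := add_mul_sin_pos hbc (2 * (x + k))
    positivity
  rw [sqrt_sub_inv_add_deriv_deriv_sqrt_comp hw hw' hw'' s, div_eq_zero_iff]
  left
  linear_combination (-b ^ 2) * sin_sq_add_cos_sq (2 * (s + k)) + hcb

/-- For `C ≥ 2` and `k ∈ ℝ`, the function
`τ(s) = 2/(C + √(C²-4)·sin(2(s+k)))` is a stationary solution of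
`τ_t = D_s(τ^{-1/2} - τ^{3/2} + D_s²(τ^{-1/2}))`: the derivative of
`τ^{-1/2} - τ^{3/2} + D_s²(τ^{-1/2})` vanishes identically. -/
theorem stmt9 (k C : ℝ) (hC : 2 ≤ C) :
    let τ : ℝ → ℝ := fun s => 2 / (C + Real.sqrt (C ^ 2 - 4) * Real.sin (2 * (s + k)))
    ∀ s : ℝ,
      deriv (fun r => (τ r) ^ (-(1 : ℝ) / 2) - (τ r) ^ ((3 : ℝ) / 2)
        + deriv (deriv (fun p => (τ p) ^ (-(1 : ℝ) / 2))) r) s = 0 := by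
  intro τ s
  have hcb : C ^ 2 = √(C ^ 2 - 4) ^ 2 + 4 := by rw [sq_sqrt (by nlinarith)]; ring
  have hbc : |√(C ^ 2 - 4)| < C := abs_lt_of_sq_lt_sq (by linarith) (by linarith)
  have hw (p : ℝ) : 0 ≤ (C + √(C ^ 2 - 4) * sin (2 * (p + k))) / 2 :=
    (div_pos (add_mul_sin_pos hbc _) two_pos).le
  have hτ (p : ℝ) : τ p = ((C + √(C ^ 2 - 4) * sin (2 * (p + k))) / 2)⁻¹ := (inv_div _ _).symm
  have hstationary (r : ℝ) :
      τ r ^ (-(1 : ℝ) / 2) - τ r ^ ((3 : ℝ) / 2) + deriv (deriv fun p => τ p ^ (-(1 : ℝ) / 2)) r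
        = 0 := by
    simp only [hτ, inv_rpow_neg_one_half (hw _), inv_rpow_three_halves (hw _)]
    exact ermakov_pinney_sqrt_sinusoid k (by linarith) hcb r
  simp only [hstationary, deriv_const]
end

section
/- Suppose (x,y,z,a,b) : ℝ → ℝ⁵ satisfies x' = -xz, y' = αyz, z' = x² - αy², a' = 2x + az, b' = 2y - αbz with initial conditions z(0) = 0, a(0) = 0, b(0) = 0. Then the identity a(t)·x(t) - α·b(t)·y(t) = 2z(t) holds for all t. -/
/-!
The quantity `a x - α b y - 2 z` is a first integral of the system: differentiating it, the
`z`-terms of `a'x` and `a x'` cancel, as do those of `b'y` and `b y'`, and what is left,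
`2x² - 2αy²`, is exactly `2z'`. It vanishes at `t = 0`, hence everywhere.
-/

theorem hasDerivAt_first_integral {α t : ℝ} {x y z a b : ℝ → ℝ}
    (hx : HasDerivAt x (-(x t) * z t) t)
    (hy : HasDerivAt y (α * y t * z t) t)
    (hz : HasDerivAt z ((x t) ^ 2 - α * (y t) ^ 2) t)
    (ha : HasDerivAt a (2 * x t + a t * z t) t)
    (hb : HasDerivAt b (2 * y t - α * b t * z t) t) :
    HasDerivAt (fun s => a s * x s - α * b s * y s - 2 * z s) 0 t := by
  have h := ((ha.mul hx).sub ((hb.const_mul α).mul hy)).sub (hz.const_mul 2)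
  refine h.congr_deriv ?_
  ring

theorem stmt15_general (α : ℝ) (x y z a b : ℝ → ℝ)
    (hx : ∀ t, HasDerivAt x (-(x t) * z t) t)
    (hy : ∀ t, HasDerivAt y (α * y t * z t) t)
    (hz : ∀ t, HasDerivAt z ((x t) ^ 2 - α * (y t) ^ 2) t)
    (ha : ∀ t, HasDerivAt a (2 * x t + a t * z t) t)
    (hb : ∀ t, HasDerivAt b (2 * y t - α * b t * z t) t)
    (hz0 : z 0 = 0) (ha0 : a 0 = 0) (hb0 : b 0 = 0) :
    ∀ t : ℝ, a t * x t - α * b t * y t = 2 * z t := by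
  intro t
  have hF t := hasDerivAt_first_integral (hx t) (hy t) (hz t) (ha t) (hb t)
  have hconst := is_const_of_deriv_eq_zero (fun s => (hF s).differentiableAt)
    (fun s => (hF s).deriv) t 0
  simp only [hz0, ha0, hb0, zero_mul, mul_zero, sub_zero] at hconst
  exact sub_eq_zero.mp hconst

/-- For solutions of `x' = -xz`, `y' = αyz`, `z' = x² - αy²`, `a' = 2x + az`,
`b' = 2y - αbz` with `z(0) = a(0) = b(0) = 0`, we have `ax - αby = 2z` for all `t`. -/
theorem stmt15 (α : ℝ) (hα : 0 < α) (x y z a b : ℝ → ℝ)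
    (hx : ∀ t, HasDerivAt x (-(x t) * z t) t)
    (hy : ∀ t, HasDerivAt y (α * y t * z t) t)
    (hz : ∀ t, HasDerivAt z ((x t) ^ 2 - α * (y t) ^ 2) t)
    (ha : ∀ t, HasDerivAt a (2 * x t + a t * z t) t)
    (hb : ∀ t, HasDerivAt b (2 * y t - α * b t * z t) t)
    (hz0 : z 0 = 0) (ha0 : a 0 = 0) (hb0 : b 0 = 0) :
    ∀ t : ℝ, a t * x t - α * b t * y t = 2 * z t :=
  stmt15_general α x y z a b hx hy hz ha hb hz0 ha0 hb0
end
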